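/- arXiv:1810.04321 — 2 statements merged into one kernel-verified Lean document; each statement's English description precedes it below -/
import Mathlib

section
/- Let h : 𝔽₂^k → {−1,1}, let m ∈ ℕ with m ≤ k, and let p ∈ (0, 1/2) with (1 − 2p)^{m+1} ≤ 1 − c for constants. Then ϑ^p(Ω × (𝔽₂^k \ Ω)) ≥ (1/4)(1 − (1−2p)^{m+1}) ∑_{|A| > m} ĥ(A)², where h = (−1)^{1_Ω}. -/
open Finset

/-!
Expanding `ĥ(A)²` as a double sum gives
`∑_A c^|A| ĥ(A)² = 4^{-k} ∑_{x,y} h(x) h(y) ∏_j (1 + c (-1)^{x_j + y_j})`,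
and for `c = 1 - 2p` the product is exactly `4^k ϑ^p(x, y)`; Parseval is the case `p = 0`,
where `ϑ^0` is uniform on the diagonal. For `h = (-1)^{1_Ω}`, `1 - h(x) h(y)` is twice the
indicator that `x` and `y` lie on different sides of `Ω`, so the symmetry and unit mass of
`ϑ^p` give `ϑ^p(Ω × Ωᶜ) = ¼ ∑_A (1 - (1-2p)^|A|) ĥ(A)²`. Since `0 ≤ 1 - 2p ≤ 1`, every term is
nonnegative and those with `|A| > m` have weight at least `1 - (1-2p)^(m+1)`.
-/

/-- Walsh function `W_A`. -/
def walsh {k : ℕ} (A : Finset (Fin k)) (x : Fin k → ZMod 2) : ℝ :=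
  ∏ j ∈ A, (-1 : ℝ) ^ ((x j).val)

/-- Fourier–Walsh coefficient with respect to the uniform measure on `𝔽₂^k`. -/
noncomputable def wcoeff {k : ℕ} (φ : (Fin k → ZMod 2) → ℝ) (A : Finset (Fin k)) : ℝ :=
  (∑ x : Fin k → ZMod 2, φ x * walsh A x) / 2 ^ k

/-- The noise measure `ϑ^p` on `𝔽₂^k × 𝔽₂^k`. -/
noncomputable def noiseMeasure {k : ℕ} (p : ℝ) (x y : Fin k → ZMod 2) : ℝ :=
  p ^ hammingDist x y * (1 - p) ^ (k - hammingDist x y) / 2 ^ k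

lemma neg_one_pow_val_mul_neg_one_pow_val (a b : ZMod 2) :
    (-1 : ℝ) ^ a.val * (-1 : ℝ) ^ b.val = if a = b then 1 else -1 := by
  obtain rfl | rfl : a = 0 ∨ a = 1 := by decide +revert
  all_goals obtain rfl | rfl : b = 0 ∨ b = 1 := by decide +revert
  all_goals simp [ZMod.val_one]

lemma sum_zmod_two_ite_one_sub (a : ZMod 2) (p : ℝ) :
    ∑ c, (if a = c then 1 - p else p) = 1 := by
  have hothers : univ.erase a = {a + 1} := by decide +revert
  rw [← sum_erase_add _ _ (mem_univ a), hothers]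
  simp

lemma sum_sum_one_sub_sign_mul_sign {α : Type*} [Fintype α] [DecidableEq α] (s : Finset α)
    (K : α → α → ℝ) (hK : ∀ x y, K x y = K y x) :
    ∑ x, ∑ y, (1 - (if x ∈ s then -1 else 1) * (if y ∈ s then -1 else 1)) * K x y
      = 4 * ∑ x ∈ s, ∑ y ∈ sᶜ, K x y := by
  set cut : α → α → ℝ := fun x y => if x ∈ s then if y ∈ sᶜ then K x y else 0 else 0
  have hpoint (x y : α) :
      (1 - (if x ∈ s then -1 else 1) * (if y ∈ s then -1 else 1)) * K x y
        = 2 * cut x y + 2 * cut y x := by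
    by_cases hx : x ∈ s <;> by_cases hy : y ∈ s <;>
      simp only [cut, hx, hy, mem_compl, if_true, if_false, not_true_eq_false,
        not_false_eq_true] <;>
      linarith [hK x y]
  have hcut : ∑ x, ∑ y, cut x y = ∑ x ∈ s, ∑ y ∈ sᶜ, K x y := by
    rw [← Fintype.sum_ite_mem s (fun x => ∑ y ∈ sᶜ, K x y)]
    simp only [cut]
    refine sum_congr rfl fun x _ => ?_
    split_ifs
    · exact Fintype.sum_ite_mem _ _
    · exact sum_const_zero
  simp_rw [hpoint, sum_add_distrib, ← mul_sum]
  rw [sum_comm (f := fun x y => cut y x), hcut]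
  ring

lemma one_sub_pow_succ_mul_sum_card_gt_le {ι : Type*} [Fintype ι] {c : ℝ} (hc0 : 0 ≤ c)
    (hc1 : c ≤ 1) (m : ℕ) {w : Finset ι → ℝ} (hw : ∀ A, 0 ≤ w A) :
    (1 - c ^ (m + 1)) * ∑ A with m < #A, w A ≤ ∑ A, (1 - c ^ #A) * w A := by
  have hnonneg (A : Finset ι) : 0 ≤ (1 - c ^ #A) * w A :=
    mul_nonneg (sub_nonneg.2 (pow_le_one₀ hc0 hc1)) (hw A)
  calc (1 - c ^ (m + 1)) * ∑ A with m < #A, w A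
      ≤ ∑ A with m < #A, (1 - c ^ #A) * w A := by
        rw [mul_sum]
        refine sum_le_sum fun A hA => mul_le_mul_of_nonneg_right ?_ (hw A)
        exact sub_le_sub_left (pow_le_pow_of_le_one hc0 hc1 (mem_filter.1 hA).2) 1
    _ ≤ ∑ A, (1 - c ^ #A) * w A :=
        sum_le_sum_of_subset_of_nonneg (filter_subset _ _) fun A _ _ => hnonneg A

section

variable {k : ℕ}

lemma walsh_mul_walsh (A : Finset (Fin k)) (x y : Fin k → ZMod 2) :
    walsh A x * walsh A y = ∏ j ∈ A, (if x j = y j then (1 : ℝ) else -1) := by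
  rw [walsh, walsh, ← prod_mul_distrib]
  exact prod_congr rfl fun j _ => neg_one_pow_val_mul_neg_one_pow_val _ _

lemma sum_pow_card_mul_walsh_mul_walsh (c : ℝ) (x y : Fin k → ZMod 2) :
    ∑ A : Finset (Fin k), c ^ #A * (walsh A x * walsh A y)
      = ∏ j, (1 + c * if x j = y j then (1 : ℝ) else -1) := by
  rw [prod_one_add, powerset_univ]
  refine sum_congr rfl fun A _ => ?_
  rw [walsh_mul_walsh, prod_mul_distrib, prod_const]

lemma sum_pow_card_mul_wcoeff_sq (φ : (Fin k → ZMod 2) → ℝ) (c : ℝ) :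
    ∑ A : Finset (Fin k), c ^ #A * wcoeff φ A ^ 2
      = (∑ x, ∑ y, φ x * φ y * ∏ j, (1 + c * if x j = y j then (1 : ℝ) else -1))
        / (2 ^ k * 2 ^ k) := by
  have hsq (A : Finset (Fin k)) : wcoeff φ A ^ 2
      = (∑ x, ∑ y, φ x * walsh A x * (φ y * walsh A y)) / (2 ^ k * 2 ^ k) := by
    rw [wcoeff, sq, div_mul_div_comm, sum_mul_sum]
  simp_rw [hsq, mul_div_assoc', ← sum_div, ← sum_pow_card_mul_walsh_mul_walsh, mul_sum]
  rw [sum_comm]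
  refine congrArg (· / _) (sum_congr rfl fun x _ => ?_)
  rw [sum_comm]
  exact sum_congr rfl fun y _ => sum_congr rfl fun A _ => by ring

lemma pow_hammingDist_mul_pow_sub_hammingDist_eq_prod (p : ℝ) (x y : Fin k → ZMod 2) :
    p ^ hammingDist x y * (1 - p) ^ (k - hammingDist x y)
      = ∏ j, (if x j = y j then 1 - p else p) := by
  have hsplit := card_filter_add_card_filter_not (s := (univ : Finset (Fin k))) (fun j => x j = y j)
  rw [card_univ, Fintype.card_fin] at hsplit
  have hdist : hammingDist x y = #{j | ¬x j = y j} := rfl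
  rw [prod_ite, prod_const, prod_const, hdist, mul_comm]
  congr 2
  omega

lemma noiseMeasure_eq_prod (p : ℝ) (x y : Fin k → ZMod 2) :
    noiseMeasure p x y
      = (∏ j, (1 + (1 - 2 * p) * if x j = y j then (1 : ℝ) else -1)) / (2 ^ k * 2 ^ k) := by
  have hfactor : ∏ j, (1 + (1 - 2 * p) * if x j = y j then (1 : ℝ) else -1)
      = ∏ j : Fin k, 2 * (if x j = y j then 1 - p else p) :=
    prod_congr rfl fun j _ => by split <;> ring
  rw [noiseMeasure, pow_hammingDist_mul_pow_sub_hammingDist_eq_prod, hfactor, prod_mul_distrib,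
    prod_const, card_univ, Fintype.card_fin, mul_div_mul_left _ _ (by positivity)]

lemma noiseMeasure_comm (p : ℝ) (x y : Fin k → ZMod 2) :
    noiseMeasure p x y = noiseMeasure p y x := by
  rw [noiseMeasure, noiseMeasure, hammingDist_comm]

lemma noiseMeasure_zero (x y : Fin k → ZMod 2) :
    noiseMeasure 0 x y = if x = y then 1 / 2 ^ k else 0 := by
  simp_rw [noiseMeasure, zero_pow_eq, hammingDist_eq_zero]
  split <;> simp_all

lemma sum_sum_noiseMeasure (p : ℝ) : ∑ x : Fin k → ZMod 2, ∑ y, noiseMeasure p x y = 1 := by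
  have hrow (x : Fin k → ZMod 2) : ∑ y, noiseMeasure p x y = 1 / 2 ^ k := by
    simp_rw [noiseMeasure, ← sum_div, pow_hammingDist_mul_pow_sub_hammingDist_eq_prod,
      ← Fintype.prod_sum fun j c => if x j = c then 1 - p else p]
    rw [prod_eq_one fun j _ => sum_zmod_two_ite_one_sub (x j) p]
  simp [hrow]

theorem sum_pow_card_mul_wcoeff_sq_eq_sum_noiseMeasure (φ : (Fin k → ZMod 2) → ℝ) (p : ℝ) :
    ∑ A : Finset (Fin k), (1 - 2 * p) ^ #A * wcoeff φ A ^ 2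
      = ∑ x, ∑ y, φ x * φ y * noiseMeasure p x y := by
  simp_rw [sum_pow_card_mul_wcoeff_sq, noiseMeasure_eq_prod, sum_div, mul_div_assoc]

theorem sum_wcoeff_sq (φ : (Fin k → ZMod 2) → ℝ) :
    ∑ A : Finset (Fin k), wcoeff φ A ^ 2 = (∑ x, φ x ^ 2) / 2 ^ k := by
  have h := sum_pow_card_mul_wcoeff_sq_eq_sum_noiseMeasure φ 0
  simp_rw [mul_zero, sub_zero, one_pow, one_mul, noiseMeasure_zero] at h
  rw [h]
  simp [mul_ite, sum_mul, sq, div_eq_mul_inv]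

theorem sum_sum_compl_noiseMeasure (Ω : Finset (Fin k → ZMod 2)) (p : ℝ) :
    ∑ x ∈ Ω, ∑ y ∈ Ωᶜ, noiseMeasure p x y
      = 1 / 4 * ∑ A : Finset (Fin k),
          (1 - (1 - 2 * p) ^ #A) * wcoeff (fun x => if x ∈ Ω then (-1 : ℝ) else 1) A ^ 2 := by
  set σ : (Fin k → ZMod 2) → ℝ := fun x => if x ∈ Ω then -1 else 1
  have hσ (x) : σ x ^ 2 = 1 := by simp only [σ]; split <;> norm_num
  have hparseval : ∑ A : Finset (Fin k), wcoeff σ A ^ 2 = 1 := by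
    simp [sum_wcoeff_sq, hσ]
  calc ∑ x ∈ Ω, ∑ y ∈ Ωᶜ, noiseMeasure p x y
      = 1 / 4 * ∑ x, ∑ y, (1 - σ x * σ y) * noiseMeasure p x y := by
        rw [sum_sum_one_sub_sign_mul_sign Ω _ (noiseMeasure_comm p)]; ring
    _ = _ := by
        simp_rw [sub_mul, one_mul, sum_sub_distrib, hparseval,
          sum_pow_card_mul_wcoeff_sq_eq_sum_noiseMeasure, sum_sum_noiseMeasure]

end

theorem stmt_12_general {k : ℕ} (Ω : Finset (Fin k → ZMod 2)) (m : ℕ)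
    (p : ℝ) (hp : p ∈ Set.Ioo (0 : ℝ) (1 / 2)) :
    (1 / 4) * (1 - (1 - 2 * p) ^ (m + 1)) *
        (∑ A ∈ univ.filter (fun A : Finset (Fin k) => m < A.card),
          wcoeff (fun x => if x ∈ Ω then (-1 : ℝ) else 1) A ^ 2)
      ≤ ∑ x ∈ Ω, ∑ y ∈ Ωᶜ, noiseMeasure p x y := by
  obtain ⟨hp0, hp2⟩ := hp
  rw [sum_sum_compl_noiseMeasure, mul_assoc]
  exact mul_le_mul_of_nonneg_left (one_sub_pow_succ_mul_sum_card_gt_le (by linarith)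
    (by linarith) m fun A => sq_nonneg _) (by norm_num)

/-- Tail lower bound for noise sensitivity: with `h = (-1)^{1_Ω}`, `m ≤ k` and
`p ∈ (0,1/2)`, one has
`ϑ^p(Ω × Ωᶜ) ≥ (1/4)(1-(1-2p)^{m+1}) ∑_{|A| > m} ĥ(A)²`. -/
theorem stmt_12 {k : ℕ} (Ω : Finset (Fin k → ZMod 2)) (m : ℕ) (hm : m ≤ k)
    (p : ℝ) (hp : p ∈ Set.Ioo (0 : ℝ) (1 / 2)) :
    (1 / 4) * (1 - (1 - 2 * p) ^ (m + 1)) *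
        (∑ A ∈ univ.filter (fun A : Finset (Fin k) => m < A.card),
          wcoeff (fun x => if x ∈ Ω then (-1 : ℝ) else 1) A ^ 2)
      ≤ ∑ x ∈ Ω, ∑ y ∈ Ωᶜ, noiseMeasure p x y :=
  stmt_12_general Ω m p hp
end

section
/- Let X be a finite set, σ a probability measure on X, and τ a probability measure on X × X. Suppose there is α ∈ (0,1] such that every Z ⊆ X with 1/4 ≤ σ(Z) ≤ 2/3 satisfies τ((Z × (X\Z)) ∪ ((X\Z) × Z)) ≥ α σ(Z). Then there exists Y ⊆ X with σ(Y) ≥ 3/4 such that every f : Y → L₁ satisfies ∬_{Y×Y} ‖f(x)−f(y)‖₁ dσ(x)dσ(y) ≲ (1/α) ∬_{Y×Y} ‖f(x)−f(y)‖₁ dτ(x,y). -/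
set_option maxHeartbeats 1000000


open Finset
open scoped ENNReal

instance : Fact ((1 : ℝ≥0∞) ≤ 1) := ⟨le_rfl⟩

lemma scalar_poincare {X : Type} [Fintype X] [DecidableEq X]
    (σ : X → ℝ) (τ : X × X → ℝ) (hτ : ∀ q, 0 ≤ τ q)
    (Y : Finset X) (K : ℝ) (hK : 0 ≤ K)
    (hcut : ∀ Z ⊆ Y, (∑ x ∈ Z, σ x) * (∑ x ∈ Y \ Z, σ x) ≤
        K * ∑ q ∈ (Z ×ˢ (Y \ Z)) ∪ ((Y \ Z) ×ˢ Z), τ q)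
    (g : X → ℝ) :
    (∑ x ∈ Y, ∑ y ∈ Y, σ x * σ y * |g x - g y|) ≤
      (2 * K) * ∑ q ∈ Y ×ˢ Y, τ q * |g q.1 - g q.2| := by
  suffices H : ∀ n : ℕ, ∀ g : X → ℝ, (Y.image g).card ≤ n →
      (∑ x ∈ Y, ∑ y ∈ Y, σ x * σ y * |g x - g y|) ≤
        (2 * K) * ∑ q ∈ Y ×ˢ Y, τ q * |g q.1 - g q.2| from H _ g le_rfl
  intro n
  induction n with
  | zero =>
    intro g hg
    have hY : Y = ∅ := by
      by_contra hne
      obtain ⟨x, hx⟩ := Finset.nonempty_iff_ne_empty.mpr hne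
      have := Finset.card_pos.mpr ⟨g x, Finset.mem_image_of_mem g hx⟩
      omega
    subst hY; simp
  | succ n ih =>
    intro g hg
    by_cases hsmall : (Y.image g).card ≤ 1
    · have hconst : ∀ x ∈ Y, ∀ y ∈ Y, g x = g y := fun x hx y hy =>
        Finset.card_le_one.mp hsmall _ (mem_image_of_mem g hx) _ (mem_image_of_mem g hy)
      have hL : (∑ x ∈ Y, ∑ y ∈ Y, σ x * σ y * |g x - g y|) = 0 := by
        apply Finset.sum_eq_zero; intro x hx
        apply Finset.sum_eq_zero; intro y hy
        rw [hconst x hx y hy]; simp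
      rw [hL]
      exact mul_nonneg (by linarith)
        (Finset.sum_nonneg fun q _ => mul_nonneg (hτ q) (abs_nonneg _))
    · push_neg at hsmall
      have hne : (Y.image g).Nonempty := Finset.card_pos.mp (by omega)
      set I := Y.image g with hI
      set m := I.min' hne with hm
      have hmI : m ∈ I := Finset.min'_mem _ _
      set T := I.erase m with hT
      have hTcard : T.card = I.card - 1 := Finset.card_erase_of_mem hmI
      have hTne : T.Nonempty := Finset.card_pos.mp (by omega)
      set m' := T.min' hTne with hm'
      have hm'T : m' ∈ T := Finset.min'_mem _ _
      have hm'I : m' ∈ I := Finset.mem_of_mem_erase hm'T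
      have hmm' : m < m' :=
        lt_of_le_of_ne (Finset.min'_le I m' hm'I) (Ne.symm (Finset.ne_of_mem_erase hm'T))
      set δ := m' - m with hδ
      have hδpos : 0 < δ := by rw [hδ]; linarith
      have hmin : ∀ x ∈ Y, m ≤ g x := fun x hx => Finset.min'_le I (g x) (mem_image_of_mem g hx)
      have heqm : ∀ x ∈ Y, g x ≤ m → g x = m := fun x hx hle => le_antisymm hle (hmin x hx)
      have hgt : ∀ x ∈ Y, ¬ g x ≤ m → m' ≤ g x := by
        intro x hx hnle
        exact Finset.min'_le T (g x)
          (Finset.mem_erase.mpr ⟨fun he => hnle (he ▸ le_rfl), mem_image_of_mem g hx⟩)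
      set h : X → ℝ := fun x => if g x ≤ m then g x + δ else g x with hh
      set χ : X → ℝ := fun x => if g x ≤ m then 1 else 0 with hχ
      set Z := Y.filter (fun x => g x ≤ m) with hZdef
      have hZY : Z ⊆ Y := Finset.filter_subset _ _
      have hYZ : Y.filter (fun x => ¬ g x ≤ m) = Y \ Z := Finset.filter_not _ _
      -- pointwise coarea step
      have key : ∀ x ∈ Y, ∀ y ∈ Y, |g x - g y| = |h x - h y| + δ * |χ x - χ y| := by
        intro x hx y hy
        by_cases h1 : g x ≤ m <;> by_cases h2 : g y ≤ m
        · have e1 := heqm x hx h1; have e2 := heqm y hy h2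
          simp [hh, hχ, h1, h2, e1, e2]
        · have e1 := heqm x hx h1; have l2 := hgt y hy h2
          simp only [hh, hχ, if_pos h1, if_neg h2, e1]
          rw [abs_of_nonpos (by linarith), abs_of_nonpos (by rw [hδ]; linarith),
            show |(1:ℝ) - 0| = 1 by norm_num]
          ring
        · have l1 := hgt x hx h1; have e2 := heqm y hy h2
          simp only [hh, hχ, if_neg h1, if_pos h2, e2]
          rw [abs_of_nonneg (by linarith), abs_of_nonneg (by rw [hδ]; linarith),
            show |(0:ℝ) - 1| = 1 by norm_num]
          ring
        · simp [hh, hχ, h1, h2]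
      -- energy decompositions
      have Eσ : (∑ x ∈ Y, ∑ y ∈ Y, σ x * σ y * |g x - g y|)
          = (∑ x ∈ Y, ∑ y ∈ Y, σ x * σ y * |h x - h y|)
            + δ * (∑ x ∈ Y, ∑ y ∈ Y, σ x * σ y * |χ x - χ y|) := by
        rw [Finset.mul_sum, ← Finset.sum_add_distrib]
        refine Finset.sum_congr rfl fun x hx => ?_
        rw [Finset.mul_sum, ← Finset.sum_add_distrib]
        refine Finset.sum_congr rfl fun y hy => ?_
        rw [key x hx y hy]; ring
      have Eτ : (∑ q ∈ Y ×ˢ Y, τ q * |g q.1 - g q.2|)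
          = (∑ q ∈ Y ×ˢ Y, τ q * |h q.1 - h q.2|)
            + δ * (∑ q ∈ Y ×ˢ Y, τ q * |χ q.1 - χ q.2|) := by
        rw [Finset.mul_sum, ← Finset.sum_add_distrib]
        refine Finset.sum_congr rfl fun q hq => ?_
        obtain ⟨hq1, hq2⟩ := Finset.mem_product.mp hq
        rw [key _ hq1 _ hq2]; ring
      -- cut energies
      have inner1 : ∀ x, g x ≤ m → (∑ y ∈ Y, σ x * σ y * |χ x - χ y|) = ∑ y ∈ Y \ Z, σ x * σ y := by
        intro x hxm
        rw [← Finset.sum_filter_add_sum_filter_not Y (fun y => g y ≤ m), hYZ]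
        rw [Finset.sum_eq_zero (fun y hy => by
          have := (Finset.mem_filter.mp hy).2
          simp [hχ, hxm, this]), zero_add]
        refine Finset.sum_congr rfl fun y hy => ?_
        have hy2 : ¬ g y ≤ m := by
          have := Finset.mem_sdiff.mp hy
          exact fun hc => this.2 (Finset.mem_filter.mpr ⟨this.1, hc⟩)
        simp [hχ, hxm, hy2]
      have inner2 : ∀ x, ¬ g x ≤ m → (∑ y ∈ Y, σ x * σ y * |χ x - χ y|) = ∑ y ∈ Z, σ x * σ y := by
        intro x hxm
        rw [← Finset.sum_filter_add_sum_filter_not Y (fun y => g y ≤ m), hYZ]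
        have z2 : (∑ y ∈ Y \ Z, σ x * σ y * |χ x - χ y|) = 0 :=
          Finset.sum_eq_zero (fun y hy => by
            have hmem := Finset.mem_sdiff.mp hy
            have hy2 : ¬ g y ≤ m := fun hc => hmem.2 (Finset.mem_filter.mpr ⟨hmem.1, hc⟩)
            simp [hχ, hxm, hy2])
        rw [z2, add_zero, ← hZdef]
        refine Finset.sum_congr rfl fun y hy => ?_
        have hy2 : g y ≤ m := (Finset.mem_filter.mp hy).2
        simp [hχ, hxm, hy2]
      have Cσ : (∑ x ∈ Y, ∑ y ∈ Y, σ x * σ y * |χ x - χ y|)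
          = 2 * ((∑ x ∈ Z, σ x) * (∑ x ∈ Y \ Z, σ x)) := by
        rw [← Finset.sum_filter_add_sum_filter_not Y (fun x => g x ≤ m), hYZ]
        rw [Finset.sum_congr rfl (fun x hx => inner1 x (Finset.mem_filter.mp hx).2),
          Finset.sum_congr rfl (fun x hx => inner2 x (by
            have := Finset.mem_sdiff.mp hx
            exact fun hc => this.2 (Finset.mem_filter.mpr ⟨this.1, hc⟩)))]
        rw [← Finset.sum_mul_sum, ← Finset.sum_mul_sum]
        ring
      have hsub : (Z ×ˢ (Y \ Z)) ∪ ((Y \ Z) ×ˢ Z) ⊆ Y ×ˢ Y := by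
        intro q hq
        rw [Finset.mem_product]
        rcases Finset.mem_union.mp hq with hq | hq <;> rw [Finset.mem_product] at hq
        · exact ⟨hZY hq.1, (Finset.sdiff_subset) hq.2⟩
        · exact ⟨(Finset.sdiff_subset) hq.1, hZY hq.2⟩
      have Cτ : (∑ q ∈ (Z ×ˢ (Y \ Z)) ∪ ((Y \ Z) ×ˢ Z), τ q)
          ≤ ∑ q ∈ Y ×ˢ Y, τ q * |χ q.1 - χ q.2| := by
        have e1 : (∑ q ∈ (Z ×ˢ (Y \ Z)) ∪ ((Y \ Z) ×ˢ Z), τ q)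
            = ∑ q ∈ (Z ×ˢ (Y \ Z)) ∪ ((Y \ Z) ×ˢ Z), τ q * |χ q.1 - χ q.2| := by
          refine Finset.sum_congr rfl fun q hq => ?_
          have habs : |χ q.1 - χ q.2| = 1 := by
            rcases Finset.mem_union.mp hq with hq | hq <;> rw [Finset.mem_product] at hq
            · have h1 : g q.1 ≤ m := (Finset.mem_filter.mp hq.1).2
              have h2 : ¬ g q.2 ≤ m := by
                have := Finset.mem_sdiff.mp hq.2
                exact fun hc => this.2 (Finset.mem_filter.mpr ⟨this.1, hc⟩)
              simp [hχ, h1, h2]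
            · have h2 : g q.2 ≤ m := (Finset.mem_filter.mp hq.2).2
              have h1 : ¬ g q.1 ≤ m := by
                have := Finset.mem_sdiff.mp hq.1
                exact fun hc => this.2 (Finset.mem_filter.mpr ⟨this.1, hc⟩)
              simp [hχ, h1, h2]
          rw [habs, mul_one]
        rw [e1]
        exact Finset.sum_le_sum_of_subset_of_nonneg hsub
          (fun q _ _ => mul_nonneg (hτ q) (abs_nonneg _))
      -- image of h is smaller
      have himg : (Y.image h).card ≤ n := by
        have hsub2 : Y.image h ⊆ T := by
          intro v hv
          obtain ⟨x, hx, rfl⟩ := Finset.mem_image.mp hv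
          by_cases h1 : g x ≤ m
          · have : h x = m' := by
              simp only [hh, if_pos h1, heqm x hx h1, hδ]; ring
            rw [this]; exact hm'T
          · have : h x = g x := if_neg h1
            rw [this]
            exact Finset.mem_erase.mpr ⟨fun he => h1 (he ▸ le_rfl), mem_image_of_mem g hx⟩
        calc (Y.image h).card ≤ T.card := Finset.card_le_card hsub2
          _ = I.card - 1 := hTcard
          _ ≤ n := by omega
      have IH := ih h himg
      have t1 := hcut Z hZY
      rw [Eσ, Eτ, Cσ]
      have d1 : δ * ((∑ x ∈ Z, σ x) * (∑ x ∈ Y \ Z, σ x))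
          ≤ δ * (K * ∑ q ∈ (Z ×ˢ (Y \ Z)) ∪ ((Y \ Z) ×ˢ Z), τ q) :=
        mul_le_mul_of_nonneg_left t1 hδpos.le
      have d2 : (δ * K) * (∑ q ∈ (Z ×ˢ (Y \ Z)) ∪ ((Y \ Z) ×ˢ Z), τ q)
          ≤ (δ * K) * (∑ q ∈ Y ×ˢ Y, τ q * |χ q.1 - χ q.2|) :=
        mul_le_mul_of_nonneg_left Cτ (mul_nonneg hδpos.le hK)
      nlinarith [IH, d1, d2]

lemma transfer {X : Type} [Fintype X] [DecidableEq X]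
    (σ : X → ℝ) (τ : X × X → ℝ) (hτ : ∀ q, 0 ≤ τ q)
    (Y : Finset X) (K : ℝ) (hK : 0 ≤ K)
    (hcut : ∀ Z ⊆ Y, (∑ x ∈ Z, σ x) * (∑ x ∈ Y \ Z, σ x) ≤
        K * ∑ q ∈ (Z ×ˢ (Y \ Z)) ∪ ((Y \ Z) ×ˢ Z), τ q)
    (f : X → lp (fun _ : ℕ => ℝ) 1) :
    (∑ x ∈ Y, ∑ y ∈ Y, σ x * σ y * ‖f x - f y‖) ≤
      (2 * K) * ∑ q ∈ Y ×ˢ Y, τ q * ‖f q.1 - f q.2‖ := by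
  have hp : 0 < (1 : ℝ≥0∞).toReal := by norm_num
  have hsxy : ∀ x y : X, Summable fun n : ℕ => |f x n - f y n| := by
    intro x y
    have := (lp.memℓp (f x - f y)).summable hp
    simpa [Real.rpow_one, lp.coeFn_sub, Pi.sub_apply] using this
  have hnorm' : ∀ x y : X, ‖f x - f y‖ = ∑' n, |f x n - f y n| := by
    intro x y
    rw [lp.norm_eq_tsum_rpow hp]
    simp [Real.rpow_one, lp.coeFn_sub, Pi.sub_apply]
  have L1 : (∑ x ∈ Y, ∑ y ∈ Y, σ x * σ y * ‖f x - f y‖)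
      = ∑' n : ℕ, ∑ x ∈ Y, ∑ y ∈ Y, σ x * σ y * |f x n - f y n| := by
    calc (∑ x ∈ Y, ∑ y ∈ Y, σ x * σ y * ‖f x - f y‖)
        = ∑ x ∈ Y, ∑ y ∈ Y, ∑' n : ℕ, σ x * σ y * |f x n - f y n| := by
          refine Finset.sum_congr rfl fun x _ => Finset.sum_congr rfl fun y _ => ?_
          rw [hnorm' x y, ← tsum_mul_left]
      _ = ∑ x ∈ Y, ∑' n : ℕ, ∑ y ∈ Y, σ x * σ y * |f x n - f y n| :=
          Finset.sum_congr rfl fun x _ =>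
            (Summable.tsum_finsetSum fun y _ => (hsxy x y).mul_left _).symm
      _ = ∑' n : ℕ, ∑ x ∈ Y, ∑ y ∈ Y, σ x * σ y * |f x n - f y n| :=
          (Summable.tsum_finsetSum fun x _ => summable_sum fun y _ => (hsxy x y).mul_left _).symm
  have R1 : (∑ q ∈ Y ×ˢ Y, τ q * ‖f q.1 - f q.2‖)
      = ∑' n : ℕ, ∑ q ∈ Y ×ˢ Y, τ q * |f q.1 n - f q.2 n| := by
    calc (∑ q ∈ Y ×ˢ Y, τ q * ‖f q.1 - f q.2‖)
        = ∑ q ∈ Y ×ˢ Y, ∑' n : ℕ, τ q * |f q.1 n - f q.2 n| := by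
          refine Finset.sum_congr rfl fun q _ => ?_
          rw [hnorm' q.1 q.2, ← tsum_mul_left]
      _ = ∑' n : ℕ, ∑ q ∈ Y ×ˢ Y, τ q * |f q.1 n - f q.2 n| :=
          (Summable.tsum_finsetSum fun q _ => (hsxy q.1 q.2).mul_left _).symm
  rw [L1, R1, ← tsum_mul_left]
  refine Summable.tsum_le_tsum ?_ ?_ ?_
  · intro n
    exact scalar_poincare σ τ hτ Y K hK hcut (fun x => f x n)
  · exact summable_sum fun x _ => summable_sum fun y _ => (hsxy x y).mul_left _
  · exact (summable_sum fun q (_ : q ∈ Y ×ˢ Y) => (hsxy q.1 q.2).mul_left _).mul_left _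

/-- The Cheeger-to-Poincaré transference lemma ([KN06, Lemma 6]): there is a universal
constant `C` such that whenever `σ` is a probability measure on a finite set `X`, `τ` a
probability measure on `X × X`, and every `Z ⊆ X` with `1/4 ≤ σ(Z) ≤ 2/3` expands in the
sense `τ(Z × Zᶜ ∪ Zᶜ × Z) ≥ α σ(Z)`, then there is `Y ⊆ X` with `σ(Y) ≥ 3/4` on which
every `ℓ₁`-valued function satisfies a Poincaré inequality with constant `C/α`. -/
theorem stmt_16 :
    ∃ C : ℝ, 0 < C ∧
      ∀ (X : Type) [Fintype X] [DecidableEq X] (σ : X → ℝ) (τ : X × X → ℝ) (α : ℝ),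
        (∀ x, 0 ≤ σ x) → (∑ x : X, σ x) = 1 →
        (∀ q, 0 ≤ τ q) → (∑ q : X × X, τ q) = 1 →
        0 < α → α ≤ 1 →
        (∀ Z : Finset X, (1 / 4 : ℝ) ≤ ∑ x ∈ Z, σ x → (∑ x ∈ Z, σ x) ≤ 2 / 3 →
          α * ∑ x ∈ Z, σ x ≤ ∑ q ∈ (Z ×ˢ Zᶜ) ∪ (Zᶜ ×ˢ Z), τ q) →
        ∃ Y : Finset X, (3 / 4 : ℝ) ≤ (∑ x ∈ Y, σ x) ∧
          ∀ f : X → lp (fun _ : ℕ => ℝ) 1,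
            (∑ x ∈ Y, ∑ y ∈ Y, σ x * σ y * ‖f x - f y‖) ≤
              (C / α) * ∑ q ∈ Y ×ˢ Y, τ q * ‖f q.1 - f q.2‖ := by
  refine ⟨200, by norm_num, ?_⟩
  intro X _ _ σ τ α hσ hσ1 hτ hτ1 hα hα1 hch
  classical
  -- basic positivity facts
  have hσS : ∀ S : Finset X, 0 ≤ ∑ x ∈ S, σ x := fun S => Finset.sum_nonneg fun x _ => hσ x
  have hσS1 : ∀ S : Finset X, (∑ x ∈ S, σ x) ≤ 1 := by
    intro S
    rw [← hσ1]
    exact Finset.sum_le_sum_of_subset_of_nonneg (Finset.subset_univ S) fun x _ _ => hσ x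
  have hτS : ∀ S : Finset (X × X), 0 ≤ ∑ q ∈ S, τ q := fun S => Finset.sum_nonneg fun q _ => hτ q
  have sum_union_le : ∀ U V : Finset (X × X),
      (∑ q ∈ U ∪ V, τ q) ≤ (∑ q ∈ U, τ q) + ∑ q ∈ V, τ q := by
    intro U V
    have h := Finset.sum_union_inter (s₁ := U) (s₂ := V) (f := τ)
    have := hτS (U ∩ V)
    linarith
  -- the maximal "bad" set B
  set P : Finset X → Prop := fun B => (∑ x ∈ B, σ x) ≤ 1/4 ∧
      (∑ q ∈ (B ×ˢ Bᶜ) ∪ (Bᶜ ×ˢ B), τ q) ≤ (α/100) * ∑ x ∈ B, σ x with hP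
  have hPempty : P ∅ := by
    constructor
    · simp
    · simp
  obtain ⟨B, hBs, hBmax⟩ := Finset.exists_max_image (Finset.univ.filter P)
    (fun B => ∑ x ∈ B, σ x) ⟨∅, Finset.mem_filter.mpr ⟨Finset.mem_univ _, hPempty⟩⟩
  have hB : P B := (Finset.mem_filter.mp hBs).2
  have hB1 : (∑ x ∈ B, σ x) ≤ 1/4 := hB.1
  have hB2 : (∑ q ∈ (B ×ˢ Bᶜ) ∪ (Bᶜ ×ˢ B), τ q) ≤ (α/100) * ∑ x ∈ B, σ x := hB.2
  have hmax : ∀ B' : Finset X, P B' → (∑ x ∈ B', σ x) ≤ ∑ x ∈ B, σ x := fun B' hB' =>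
    hBmax B' (Finset.mem_filter.mpr ⟨Finset.mem_univ _, hB'⟩)
  have hYσ : (∑ x ∈ Bᶜ, σ x) = 1 - ∑ x ∈ B, σ x := by
    have := Finset.sum_compl_add_sum B σ
    linarith [hσ1 ▸ this]
  refine ⟨Bᶜ, by rw [hYσ]; linarith, ?_⟩
  -- the cut inequality for Z with small side
  have half : ∀ Z ⊆ Bᶜ, (∑ x ∈ Z, σ x) ≤ 1/2 →
      (∑ x ∈ Z, σ x) * (∑ x ∈ Bᶜ \ Z, σ x) ≤
        (100/α) * ∑ q ∈ (Z ×ˢ (Bᶜ \ Z)) ∪ ((Bᶜ \ Z) ×ˢ Z), τ q := by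
    intro Z hZY hZhalf
    have hZB : ∀ x, x ∈ Z → x ∉ B := fun x hx => Finset.mem_compl.mp (hZY hx)
    have hτy := hτS ((Z ×ˢ (Bᶜ \ Z)) ∪ ((Bᶜ \ Z) ×ˢ Z))
    have hZ0 := hσS Z
    have hZ1 := hσS1 Z
    have hYZ0 := hσS (Bᶜ \ Z)
    have hYZ1 := hσS1 (Bᶜ \ Z)
    rw [div_mul_eq_mul_div, le_div_iff₀ hα]
    by_cases h14 : (1/4 : ℝ) ≤ ∑ x ∈ Z, σ x
    · -- Cheeger applies to Z itself
      have hcheZ := hch Z h14 (by linarith)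
      have hinc : (Z ×ˢ Zᶜ) ∪ (Zᶜ ×ˢ Z) ⊆
          ((B ×ˢ Bᶜ) ∪ (Bᶜ ×ˢ B)) ∪ ((Z ×ˢ (Bᶜ \ Z)) ∪ ((Bᶜ \ Z) ×ˢ Z)) := by
        intro q hq
        have h1 := hZB q.1
        have h2 := hZB q.2
        simp only [Finset.mem_union, Finset.mem_product, Finset.mem_compl,
          Finset.mem_sdiff] at hq ⊢
        tauto
      have hle : (∑ q ∈ (Z ×ˢ Zᶜ) ∪ (Zᶜ ×ˢ Z), τ q) ≤
          (∑ q ∈ (B ×ˢ Bᶜ) ∪ (Bᶜ ×ˢ B), τ q)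
            + ∑ q ∈ (Z ×ˢ (Bᶜ \ Z)) ∪ ((Bᶜ \ Z) ×ˢ Z), τ q :=
        le_trans (Finset.sum_le_sum_of_subset_of_nonneg hinc fun q _ _ => hτ q)
          (sum_union_le _ _)
      have hBσ0 := hσS B
      nlinarith [mul_le_mul_of_nonneg_left hZhalf (mul_nonneg hα.le hZ0),
        mul_nonneg (mul_nonneg hα.le hZ0) (by linarith : (0:ℝ) ≤ 1 - ∑ x ∈ Bᶜ \ Z, σ x)]
    · push_neg at h14
      by_cases hz0 : (∑ x ∈ Z, σ x) ≤ 0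
      · have : (∑ x ∈ Z, σ x) = 0 := le_antisymm hz0 hZ0
        rw [this]
        nlinarith
      · push_neg at hz0
        have hdisj : Disjoint B Z := Finset.disjoint_left.mpr fun x hxB hxZ => hZB x hxZ hxB
        have hBZσ : (∑ x ∈ B ∪ Z, σ x) = (∑ x ∈ B, σ x) + ∑ x ∈ Z, σ x :=
          Finset.sum_union hdisj
        have hinc2 : ((B ∪ Z) ×ˢ (B ∪ Z)ᶜ) ∪ ((B ∪ Z)ᶜ ×ˢ (B ∪ Z)) ⊆
            ((B ×ˢ Bᶜ) ∪ (Bᶜ ×ˢ B)) ∪ ((Z ×ˢ (Bᶜ \ Z)) ∪ ((Bᶜ \ Z) ×ˢ Z)) := by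
          intro q hq
          have h1 := hZB q.1
          have h2 := hZB q.2
          simp only [Finset.mem_union, Finset.mem_product, Finset.mem_compl,
            Finset.mem_sdiff] at hq ⊢
          tauto
        have hle2 : (∑ q ∈ ((B ∪ Z) ×ˢ (B ∪ Z)ᶜ) ∪ ((B ∪ Z)ᶜ ×ˢ (B ∪ Z)), τ q) ≤
            (∑ q ∈ (B ×ˢ Bᶜ) ∪ (Bᶜ ×ˢ B), τ q)
              + ∑ q ∈ (Z ×ˢ (Bᶜ \ Z)) ∪ ((Bᶜ \ Z) ×ˢ Z), τ q :=
          le_trans (Finset.sum_le_sum_of_subset_of_nonneg hinc2 fun q _ _ => hτ q)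
            (sum_union_le _ _)
        by_cases hq4 : (∑ x ∈ B, σ x) + (∑ x ∈ Z, σ x) ≤ 1/4
        · -- B ∪ Z would be a bigger bad set
          have hnotP : ¬ P (B ∪ Z) := fun hP' => by
            have := hmax (B ∪ Z) hP'
            rw [hBZσ] at this
            linarith
          have hPbig : (α/100) * (∑ x ∈ B ∪ Z, σ x) <
              ∑ q ∈ ((B ∪ Z) ×ˢ (B ∪ Z)ᶜ) ∪ ((B ∪ Z)ᶜ ×ˢ (B ∪ Z)), τ q := by
            by_contra hcon
            push_neg at hcon
            exact hnotP ⟨by rw [hBZσ]; linarith, hcon⟩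
          rw [hBZσ] at hPbig
          nlinarith [mul_le_mul_of_nonneg_left hYZ1 (mul_nonneg hα.le hZ0)]
        · push_neg at hq4
          have hcheBZ := hch (B ∪ Z) (by rw [hBZσ]; linarith) (by rw [hBZσ]; linarith)
          rw [hBZσ] at hcheBZ
          have hBσ0 := hσS B
          nlinarith [mul_le_mul_of_nonneg_left hYZ1 (mul_nonneg hα.le hZ0),
            mul_le_mul_of_nonneg_right hZ1 hYZ0]
  -- the full cut inequality
  have hcut : ∀ Z ⊆ Bᶜ, (∑ x ∈ Z, σ x) * (∑ x ∈ Bᶜ \ Z, σ x) ≤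
      (100/α) * ∑ q ∈ (Z ×ˢ (Bᶜ \ Z)) ∪ ((Bᶜ \ Z) ×ˢ Z), τ q := by
    intro Z hZY
    by_cases hhalf : (∑ x ∈ Z, σ x) ≤ 1/2
    · exact half Z hZY hhalf
    · push_neg at hhalf
      have hZ'Y : Bᶜ \ Z ⊆ Bᶜ := Finset.sdiff_subset
      have hZ'σ : (∑ x ∈ Bᶜ \ Z, σ x) = (∑ x ∈ Bᶜ, σ x) - ∑ x ∈ Z, σ x :=
        Finset.sum_sdiff_eq_sub hZY
      have h := half (Bᶜ \ Z) hZ'Y (by rw [hZ'σ]; linarith [hσS1 Bᶜ])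
      rw [Finset.sdiff_sdiff_eq_self hZY] at h
      calc (∑ x ∈ Z, σ x) * (∑ x ∈ Bᶜ \ Z, σ x)
          = (∑ x ∈ Bᶜ \ Z, σ x) * (∑ x ∈ Z, σ x) := by ring
        _ ≤ (100/α) * ∑ q ∈ ((Bᶜ \ Z) ×ˢ Z) ∪ (Z ×ˢ (Bᶜ \ Z)), τ q := h
        _ = (100/α) * ∑ q ∈ (Z ×ˢ (Bᶜ \ Z)) ∪ ((Bᶜ \ Z) ×ˢ Z), τ q := by
            rw [Finset.union_comm]
  intro f
  have hK : (0:ℝ) ≤ 100/α := by positivity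
  have := transfer σ τ hτ Bᶜ (100/α) hK hcut f
  have h200 : (2 : ℝ) * (100/α) = 200/α := by ring
  rw [h200] at this
  exact this
end
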